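/- arXiv:2010.08993 — 2 statements merged into one kernel-verified Lean document; each statement's English description precedes it below -/
import Mathlib

section
/- Let A₀ be a surjective linear map with right inverse A₀⁺, Δ a perturbation with κ := ‖A₀⁺‖·‖Δ‖ < 1, and let u₀ satisfy A₀ u₀ = b₀. Then there exists ũ with (A₀ + Δ)ũ = b₀ + δb and ‖ũ - u₀‖ ≤ ‖A₀⁺‖·(‖Δ‖·‖u₀‖ + ‖δb‖)/(1 - κ). -/
theorem stmt_8 {m n : ℕ} (hmn : n ≤ m)
    (A₀ Δ : EuclideanSpace ℝ (Fin m) →L[ℝ] EuclideanSpace ℝ (Fin n))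
    (A₀p : EuclideanSpace ℝ (Fin n) →L[ℝ] EuclideanSpace ℝ (Fin m))
    (hright : A₀.comp A₀p = ContinuousLinearMap.id ℝ (EuclideanSpace ℝ (Fin n)))
    (hκ : ‖A₀p‖ * ‖Δ‖ < 1)
    (b₀ δb : EuclideanSpace ℝ (Fin n)) (u₀ : EuclideanSpace ℝ (Fin m))
    (hu₀ : A₀ u₀ = b₀) :
    ∃ ut : EuclideanSpace ℝ (Fin m), (A₀ + Δ) ut = b₀ + δb ∧
      ‖ut - u₀‖ ≤ ‖A₀p‖ * (‖Δ‖ * ‖u₀‖ + ‖δb‖) / (1 - ‖A₀p‖ * ‖Δ‖) := by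
  set κ : ℝ := ‖A₀p‖ * ‖Δ‖ with hκdef
  have hκ0 : 0 ≤ κ := mul_nonneg (norm_nonneg _) (norm_nonneg _)
  set f : EuclideanSpace ℝ (Fin m) → EuclideanSpace ℝ (Fin m) :=
    fun v => A₀p (δb - Δ u₀ - Δ v) with hf
  have hAAp : ∀ x, A₀ (A₀p x) = x := by
    intro x
    have := congrArg (fun T => T x) hright
    simpa using this
  have hlip : LipschitzWith ⟨κ, hκ0⟩ f := by
    apply LipschitzWith.of_dist_le_mul
    intro x y
    have h1 : f x - f y = A₀p (Δ (y - x)) := by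
      simp only [hf, ← map_sub]
      congr 1
      simp [map_sub]
    rw [dist_eq_norm, dist_eq_norm, h1]
    calc ‖A₀p (Δ (y - x))‖ ≤ ‖A₀p‖ * ‖Δ (y - x)‖ := A₀p.le_opNorm _
      _ ≤ ‖A₀p‖ * (‖Δ‖ * ‖y - x‖) := by
          exact mul_le_mul_of_nonneg_left (Δ.le_opNorm _) (norm_nonneg _)
      _ = κ * ‖x - y‖ := by rw [norm_sub_rev]; ring
  have hcontr : ContractingWith ⟨κ, hκ0⟩ f := ⟨by exact_mod_cast hκ, hlip⟩
  obtain ⟨v, hv⟩ : ∃ v, f v = v :=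
    ⟨hcontr.fixedPoint f, hcontr.fixedPoint_isFixedPt⟩
  refine ⟨u₀ + v, ?_, ?_⟩
  · have hA₀v : A₀ v = δb - Δ u₀ - Δ v := by
      conv_lhs => rw [← hv]
      exact hAAp _
    simp only [ContinuousLinearMap.add_apply, map_add, hu₀, hA₀v]
    abel
  · have hbound : ‖v‖ ≤ ‖A₀p‖ * (‖δb‖ + ‖Δ‖ * ‖u₀‖ + ‖Δ‖ * ‖v‖) := by
      conv_lhs => rw [← hv]
      calc ‖A₀p (δb - Δ u₀ - Δ v)‖ ≤ ‖A₀p‖ * ‖δb - Δ u₀ - Δ v‖ := A₀p.le_opNorm _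
        _ ≤ ‖A₀p‖ * (‖δb‖ + ‖Δ‖ * ‖u₀‖ + ‖Δ‖ * ‖v‖) := by
            apply mul_le_mul_of_nonneg_left _ (norm_nonneg _)
            calc ‖δb - Δ u₀ - Δ v‖ ≤ ‖δb - Δ u₀‖ + ‖Δ v‖ := norm_sub_le _ _
              _ ≤ ‖δb‖ + ‖Δ u₀‖ + ‖Δ v‖ := by
                  gcongr; exact norm_sub_le _ _
              _ ≤ ‖δb‖ + ‖Δ‖ * ‖u₀‖ + ‖Δ‖ * ‖v‖ := by
                  gcongr <;> exact (Δ.le_opNorm _)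
    have hsimp : u₀ + v - u₀ = v := by abel
    rw [hsimp]
    rw [le_div_iff₀ (by linarith)]
    nlinarith [norm_nonneg v]
end

section
/- Let g(x,u) = g₀(x) + g₁(x)u with g₀ L₀-Lipschitz and g₁ L₁-Lipschitz (operator norm). Suppose g₁(x_k) has a right inverse g₁(x_k)⁺ with ‖g₁(x_k)⁺‖·L₁·ε < 1, and let u_k solve g₁(x_k)u_k = x_{k+1} - g₀(x_k). Then for every x̃ with ‖x̃ - x_k‖ ≤ ε there exists ũ with g(x̃, ũ) = x_{k+1} and ‖ũ - u_k‖ ≤ ‖g₁(x_k)⁺‖·(L₁·ε·‖u_k‖ + L₀·ε)/(1 - ‖g₁(x_k)⁺‖·L₁·ε). -/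
theorem stmt_15 {n m : ℕ}
    (g₀ : EuclideanSpace ℝ (Fin n) → EuclideanSpace ℝ (Fin n))
    (g₁ : EuclideanSpace ℝ (Fin n) → (EuclideanSpace ℝ (Fin m) →L[ℝ] EuclideanSpace ℝ (Fin n)))
    (L₀ L₁ ε : ℝ) (hL₀ : 0 ≤ L₀) (hL₁ : 0 ≤ L₁) (hε : 0 < ε)
    (hg₀ : ∀ a b, ‖g₀ a - g₀ b‖ ≤ L₀ * ‖a - b‖)
    (hg₁ : ∀ a b, ‖g₁ a - g₁ b‖ ≤ L₁ * ‖a - b‖)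
    (xk xk1 : EuclideanSpace ℝ (Fin n))
    (g₁p : EuclideanSpace ℝ (Fin n) →L[ℝ] EuclideanSpace ℝ (Fin m))
    (hright : (g₁ xk).comp g₁p = ContinuousLinearMap.id ℝ (EuclideanSpace ℝ (Fin n)))
    (hκ : ‖g₁p‖ * (L₁ * ε) < 1)
    (uk : EuclideanSpace ℝ (Fin m)) (huk : uk = g₁p (xk1 - g₀ xk)) :
    ∀ xt : EuclideanSpace ℝ (Fin n), ‖xt - xk‖ ≤ ε →
      ∃ ut : EuclideanSpace ℝ (Fin m),
        g₀ xt + g₁ xt ut = xk1 ∧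
        ‖ut - uk‖ ≤ ‖g₁p‖ * (L₁ * ε * ‖uk‖ + L₀ * ε) / (1 - ‖g₁p‖ * (L₁ * ε)) := by
  intro xt hxt
  set κ := ‖g₁p‖ * (L₁ * ε) with hκdef
  have hκ0 : 0 ≤ κ := by positivity
  set E : EuclideanSpace ℝ (Fin m) →L[ℝ] EuclideanSpace ℝ (Fin n) := g₁ xt - g₁ xk with hEdef
  set A : EuclideanSpace ℝ (Fin m) →L[ℝ] EuclideanSpace ℝ (Fin m) := g₁p.comp E with hAdef
  have hEnorm : ‖E‖ ≤ L₁ * ε :=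
    (hg₁ xt xk).trans (mul_le_mul_of_nonneg_left hxt hL₁)
  have hAnorm : ‖A‖ ≤ κ := by
    refine (ContinuousLinearMap.opNorm_comp_le g₁p E).trans ?_
    exact mul_le_mul_of_nonneg_left hEnorm (norm_nonneg _)
  have hAlt : ‖-A‖ < 1 := by rw [norm_neg]; exact lt_of_le_of_lt hAnorm hκ
  set u := Units.oneSub (-A) hAlt with hu
  set c : EuclideanSpace ℝ (Fin m) := g₁p (xk1 - g₀ xt) with hc
  set ut : EuclideanSpace ℝ (Fin m) := (↑u⁻¹ : EuclideanSpace ℝ (Fin m) →L[ℝ] EuclideanSpace ℝ (Fin m)) c with hut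
  have key : ut + A ut = c := by
    have h := u.mul_inv
    have h2 : ((↑u * ↑u⁻¹ : EuclideanSpace ℝ (Fin m) →L[ℝ] EuclideanSpace ℝ (Fin m))) c = c := by
      rw [h]; rfl
    rw [ContinuousLinearMap.mul_apply] at h2
    have hval : (↑u : EuclideanSpace ℝ (Fin m) →L[ℝ] EuclideanSpace ℝ (Fin m)) = 1 - (-A) := rfl
    rw [hval] at h2
    simp only [sub_neg_eq_add, ContinuousLinearMap.add_apply,
      ContinuousLinearMap.one_apply] at h2
    exact h2
  have hr : ∀ y, g₁ xk (g₁p y) = y := by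
    intro y
    have := DFunLike.congr_fun hright y
    simpa using this
  refine ⟨ut, ?_, ?_⟩
  · -- equation
    have h3 := congrArg (g₁ xk) key
    rw [map_add] at h3
    rw [hAdef, ContinuousLinearMap.comp_apply, hr, hc, hr] at h3
    have hEut : E ut = g₁ xt ut - g₁ xk ut := by
      rw [hEdef]; simp [ContinuousLinearMap.sub_apply]
    rw [hEut] at h3
    have h4 : g₁ xt ut = xk1 - g₀ xt := by rw [← h3]; abel
    rw [h4]; abel
  · -- norm bound
    have h1 : ut + A ut = uk + g₁p (g₀ xk - g₀ xt) := by
      rw [key, hc, huk, ← map_add]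
      congr 1
      abel
    have h2 : ut - uk + A ut = g₁p (g₀ xk - g₀ xt) := by
      rw [sub_add_eq_add_sub, h1]; abel
    have h3 : ut - uk = g₁p (g₀ xk - g₀ xt) - A uk - A (ut - uk) := by
      rw [map_sub A, ← h2]; abel
    have b1 : ‖g₁p (g₀ xk - g₀ xt)‖ ≤ ‖g₁p‖ * (L₀ * ε) := by
      refine (g₁p.le_opNorm _).trans ?_
      refine mul_le_mul_of_nonneg_left ?_ (norm_nonneg _)
      refine (hg₀ xk xt).trans ?_
      rw [norm_sub_rev] at hxt
      exact mul_le_mul_of_nonneg_left hxt hL₀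
    have b2 : ‖A uk‖ ≤ κ * ‖uk‖ :=
      (A.le_opNorm uk).trans (mul_le_mul_of_nonneg_right hAnorm (norm_nonneg _))
    have b3 : ‖A (ut - uk)‖ ≤ κ * ‖ut - uk‖ :=
      (A.le_opNorm _).trans (mul_le_mul_of_nonneg_right hAnorm (norm_nonneg _))
    have hnorm : ‖ut - uk‖ ≤ ‖g₁p‖ * (L₀ * ε) + κ * ‖uk‖ + κ * ‖ut - uk‖ := by
      calc ‖ut - uk‖ = ‖g₁p (g₀ xk - g₀ xt) - A uk - A (ut - uk)‖ := by rw [← h3]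
        _ ≤ ‖g₁p (g₀ xk - g₀ xt) - A uk‖ + ‖A (ut - uk)‖ := norm_sub_le _ _
        _ ≤ ‖g₁p (g₀ xk - g₀ xt)‖ + ‖A uk‖ + ‖A (ut - uk)‖ := by
            linarith [norm_sub_le (g₁p (g₀ xk - g₀ xt)) (A uk)]
        _ ≤ ‖g₁p‖ * (L₀ * ε) + κ * ‖uk‖ + κ * ‖ut - uk‖ := by linarith
    have hpos : (0:ℝ) < 1 - κ := by linarith
    rw [le_div_iff₀ hpos]
    have hexp : ‖g₁p‖ * (L₁ * ε * ‖uk‖ + L₀ * ε) = κ * ‖uk‖ + ‖g₁p‖ * (L₀ * ε) := by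
      rw [hκdef]; ring
    rw [hexp]
    generalize hD : ‖ut - uk‖ = D at hnorm ⊢
    clear_value κ
    ring_nf at hnorm ⊢
    linarith
end
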